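/- arXiv:0711.1552 — 4 statements merged into one kernel-verified Lean document; each statement's English description precedes it below -/
import Mathlib

section
/- For the system f_1(c) = p_1 c_0/(p_2 + c_3) - p_3 c_1, f_2(c) = p_3 c_1 - p_4 c_2, f_3(c) = p_4 c_2 - p_5 c_3/(p_6 + c_3) with all parameters strictly positive, the determinant of the Jacobian matrix ∂f/∂c is strictly negative at every point c in the open positive orthant ℝ³_{>0}. -/
/-!
The Jacobian has the sparsity pattern of a negative feedback loop `c₁ → c₂ → c₃ ⊣ c₁`: its only
nonzero entries are the diagonal `-p₃, -p₄, -B`, the subdiagonal `p₃, p₄` and the corner `-A`,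
where `A = p₁c₀/(p₂+c₃)²` and `B = p₅p₆/(p₆+c₃)²` are the slopes of the repression and of the
saturating degradation (paper indexing: `c₃` is `c 2`). Expanding along the first row gives
`det = -p₃p₄(A + B) < 0`.
-/

open ContinuousLinearMap

theorem Matrix.det_feedback_loop {R : Type*} [CommRing R] (a b u v : R) :
    !![-a, 0, -u; a, -b, 0; 0, b, -v].det = -(a * b * (u + v)) := by
  simp [Matrix.det_fin_three]
  ring

theorem hasDerivAt_const_div_const_add (k p t : ℝ) (h : p + t ≠ 0) :
    HasDerivAt (fun s => k / (p + s)) (-(k / (p + t) ^ 2)) t := by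
  have hd : HasDerivAt (fun s => k / (p + s)) ((0 * (p + t) - k * 1) / (p + t) ^ 2) t :=
    (hasDerivAt_const t k).div ((hasDerivAt_id' t).const_add p) h
  exact hd.congr_deriv (by ring)

theorem hasDerivAt_mul_div_const_add (k p t : ℝ) (h : p + t ≠ 0) :
    HasDerivAt (fun s => k * s / (p + s)) (k * p / (p + t) ^ 2) t := by
  have hd : HasDerivAt (fun s => k * s / (p + s)) ((k * 1 * (p + t) - k * t * 1) / (p + t) ^ 2) t :=
    ((hasDerivAt_id' t).const_mul k).div ((hasDerivAt_id' t).const_add p) h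
  exact hd.congr_deriv (by ring)

theorem jacobian_feedback_loop_eq (p1 p2 p3 p4 p5 p6 c0 : ℝ) (c : Fin 3 → ℝ)
    (h2 : p2 + c 2 ≠ 0) (h6 : p6 + c 2 ≠ 0) :
    (Matrix.of fun i j : Fin 3 =>
      fderiv ℝ (fun x : Fin 3 → ℝ =>
        (![p1 * c0 / (p2 + x 2) - p3 * x 0,
           p3 * x 0 - p4 * x 1,
           p4 * x 1 - p5 * x 2 / (p6 + x 2)] : Fin 3 → ℝ) i) c
        (Pi.single j (1 : ℝ))) =
      !![-p3, 0, -(p1 * c0 / (p2 + c 2) ^ 2); p3, -p4, 0; 0, p4, -(p5 * p6 / (p6 + c 2) ^ 2)] := by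
  have hx : ∀ k : Fin 3, HasFDerivAt (fun x : Fin 3 → ℝ => x k) (proj k) c :=
    fun k => hasFDerivAt_apply (𝕜 := ℝ) k c
  have row0 : HasFDerivAt (fun x : Fin 3 → ℝ => p1 * c0 / (p2 + x 2) - p3 * x 0)
      (-(p1 * c0 / (p2 + c 2) ^ 2) • proj (2 : Fin 3) - p3 • proj (0 : Fin 3)) c :=
    ((hasDerivAt_const_div_const_add (p1 * c0) p2 (c 2) h2).comp_hasFDerivAt c (hx 2) :).sub
      ((hx 0).const_mul p3)
  have row1 : HasFDerivAt (fun x : Fin 3 → ℝ => p3 * x 0 - p4 * x 1)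
      (p3 • proj (0 : Fin 3) - p4 • proj (1 : Fin 3)) c :=
    ((hx 0).const_mul p3).sub ((hx 1).const_mul p4)
  have row2 : HasFDerivAt (fun x : Fin 3 → ℝ => p4 * x 1 - p5 * x 2 / (p6 + x 2))
      (p4 • proj (1 : Fin 3) - (p5 * p6 / (p6 + c 2) ^ 2) • proj (2 : Fin 3)) c :=
    ((hx 1).const_mul p4).sub
      ((hasDerivAt_mul_div_const_add p5 p6 (c 2) h6).comp_hasFDerivAt c (hx 2) :)
  ext i j
  fin_cases i <;> fin_cases j <;>
    simp [row0.fderiv, row1.fderiv, row2.fderiv]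

theorem stmt_3 (p1 p2 p3 p4 p5 p6 c0 : ℝ)
    (hp1 : 0 < p1) (hp2 : 0 < p2) (hp3 : 0 < p3) (hp4 : 0 < p4)
    (hp5 : 0 < p5) (hp6 : 0 < p6) (hc0 : 0 < c0)
    (c : Fin 3 → ℝ) (hc : ∀ i, 0 < c i) :
    (Matrix.of fun i j : Fin 3 =>
      fderiv ℝ (fun x : Fin 3 → ℝ =>
        (![p1 * c0 / (p2 + x 2) - p3 * x 0,
           p3 * x 0 - p4 * x 1,
           p4 * x 1 - p5 * x 2 / (p6 + x 2)] : Fin 3 → ℝ) i) c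
        (Pi.single j (1 : ℝ))).det < 0 := by
  have hc2 := hc 2
  rw [jacobian_feedback_loop_eq p1 p2 p3 p4 p5 p6 c0 c (by positivity) (by positivity),
    Matrix.det_feedback_loop]
  exact neg_neg_of_pos (by positivity)
end

section
/- Consider the MAPK cascade system on the open unit cube Ω = (0,1)³: f_1(c) = -b_1 c_1/(c_1 + a_1) + d_1(1 - c_1)/(e_1 + (1 - c_1)) · μ/(1 + k c_3), f_2(c) = -b_2 c_2/(c_2 + a_2) + d_2(1 - c_2)/(e_2 + (1 - c_2)) · c_1, f_3(c) = -b_3 c_3/(c_3 + a_3) + d_3(1 - c_3)/(e_3 + (1 - c_3)) · c_2, with all parameters a_i, b_i, d_i, e_i, μ, k strictly positive. Then f has no zeros on the boundary of the closed unit cube [0,1]³. -/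
lemma aux_ne (a b d e P x : ℝ) (ha : 0 < a) (hb : 0 < b) (hd : 0 < d)
    (he : 0 < e) (hP : 0 < P)
    (heq : -(b * x) / (x + a) + d * (1 - x) / (e + (1 - x)) * P = 0) :
    x ≠ 0 ∧ x ≠ 1 := by
  constructor
  · rintro rfl
    rw [show -(b*(0:ℝ))/(0+a) = 0 by simp] at heq
    have h : d * (1 - 0) / (e + (1 - 0)) * P > 0 := by positivity
    linarith
  · rintro rfl
    rw [show d * (1-(1:ℝ))/(e+(1-1)) * P = 0 by simp] at heq
    have h : -(b * 1) / (1 + a) < 0 := by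
      apply div_neg_of_neg_of_pos <;> linarith
    linarith

theorem stmt_5 (a1 a2 a3 b1 b2 b3 d1 d2 d3 e1 e2 e3 μ k : ℝ)
    (ha1 : 0 < a1) (ha2 : 0 < a2) (ha3 : 0 < a3)
    (hb1 : 0 < b1) (hb2 : 0 < b2) (hb3 : 0 < b3)
    (hd1 : 0 < d1) (hd2 : 0 < d2) (hd3 : 0 < d3)
    (he1 : 0 < e1) (he2 : 0 < e2) (he3 : 0 < e3)
    (hμ : 0 < μ) (hk : 0 < k)
    (c1 c2 c3 : ℝ)
    (h1 : c1 ∈ Set.Icc (0:ℝ) 1) (h2 : c2 ∈ Set.Icc (0:ℝ) 1) (h3 : c3 ∈ Set.Icc (0:ℝ) 1)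
    (hbdry : c1 = 0 ∨ c1 = 1 ∨ c2 = 0 ∨ c2 = 1 ∨ c3 = 0 ∨ c3 = 1) :
    ¬(-(b1 * c1) / (c1 + a1) + d1 * (1 - c1) / (e1 + (1 - c1)) * (μ / (1 + k * c3)) = 0 ∧
      -(b2 * c2) / (c2 + a2) + d2 * (1 - c2) / (e2 + (1 - c2)) * c1 = 0 ∧
      -(b3 * c3) / (c3 + a3) + d3 * (1 - c3) / (e3 + (1 - c3)) * c2 = 0) := by
  rintro ⟨hf1, hf2, hf3⟩
  obtain ⟨h10, h31⟩ := h1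
  obtain ⟨h20, _⟩ := h2
  obtain ⟨h30, _⟩ := h3
  have hP1 : 0 < μ / (1 + k * c3) := by
    apply div_pos hμ; nlinarith
  obtain ⟨hc10, hc11⟩ := aux_ne a1 b1 d1 e1 _ c1 ha1 hb1 hd1 he1 hP1 hf1
  have hc1pos : 0 < c1 := lt_of_le_of_ne h10 (Ne.symm hc10)
  obtain ⟨hc20, hc21⟩ := aux_ne a2 b2 d2 e2 _ c2 ha2 hb2 hd2 he2 hc1pos hf2
  have hc2pos : 0 < c2 := lt_of_le_of_ne h20 (Ne.symm hc20)
  obtain ⟨hc30, hc31⟩ := aux_ne a3 b3 d3 e3 _ c3 ha3 hb3 hd3 he3 hc2pos hf3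
  rcases hbdry with h|h|h|h|h|h
  exacts [hc10 h, hc11 h, hc20 h, hc21 h, hc30 h, hc31 h]
end

section
/- Consider the mass-action system with inflows and unit outflows for the network {A+B → P, B+C → Q, C → 2A}: r_A = i_A - c_A - k_1 c_A c_B + 2 k_3 c_C, r_B = i_B - c_B - k_1 c_A c_B - k_2 c_B c_C, r_C = i_C - c_C - k_2 c_B c_C - k_3 c_C, r_P = i_P - c_P + k_1 c_A c_B, r_Q = i_Q - c_Q + k_2 c_B c_C, where k_1 = k_{A+B→P}, k_2 = k_{B+C→Q}, k_3 = k_{C→2A}. Then det(∂r/∂c) = -1 - k_1 c_A - k_2 c_C - k_2 c_B - k_1 k_2 c_A c_B - k_3 - k_1 k_3 c_A - k_2 k_3 c_C - k_1 c_B - k_1 k_3 c_B - k_1 k_2 c_B² - k_1 k_2 c_B c_C + k_1 k_2 k_3 c_B c_C. -/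
/-!
The rate map is polynomial, so its derivative follows from the product rule applied to the
mass-action monomials. The columns of the Jacobian for `P` and `Q` are `-e_P` and `-e_Q`, so its
determinant is that of the `3 × 3` block in `A, B, C`, and cofactor expansion gives the formula.
-/

open ContinuousLinearMap

noncomputable section

def jacobianMatrix {𝕜 : Type*} [NontriviallyNormedField 𝕜] {m n : Type*} [DecidableEq n]
    (f : (n → 𝕜) → m → 𝕜) (c : n → 𝕜) : Matrix m n 𝕜 :=
  Matrix.of fun i j => fderiv 𝕜 (fun x => f x i) c (Pi.single j 1)

def reactionRate (k1 k2 k3 iA iB iC iP iQ : ℝ) (x : Fin 5 → ℝ) : Fin 5 → ℝ :=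
  ![iA - x 0 - k1 * x 0 * x 1 + 2 * k3 * x 2,
    iB - x 1 - k1 * x 0 * x 1 - k2 * x 1 * x 2,
    iC - x 2 - k2 * x 1 * x 2 - k3 * x 2,
    iP - x 3 + k1 * x 0 * x 1,
    iQ - x 4 + k2 * x 1 * x 2]

def reactionJacobian (k1 k2 k3 : ℝ) (c : Fin 5 → ℝ) : Matrix (Fin 5) (Fin 5) ℝ :=
  !![-1 - k1 * c 1, -(k1 * c 0), 2 * k3, 0, 0;
     -(k1 * c 1), -1 - k1 * c 0 - k2 * c 2, -(k2 * c 1), 0, 0;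
     0, -(k2 * c 2), -1 - k2 * c 1 - k3, 0, 0;
     k1 * c 1, k1 * c 0, 0, -1, 0;
     0, k2 * c 2, k2 * c 1, 0, -1]

end

theorem HasFDerivAt.jacobianMatrix_eq {𝕜 : Type*} [NontriviallyNormedField 𝕜]
    {m n : Type*} [Fintype n] [DecidableEq n] [Fintype m]
    {f : (n → 𝕜) → m → 𝕜} {f' : (n → 𝕜) →L[𝕜] m → 𝕜} {c : n → 𝕜} (hf : HasFDerivAt f f' c) :
    jacobianMatrix f c = LinearMap.toMatrix' (f' : (n → 𝕜) →ₗ[𝕜] m → 𝕜) := by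
  ext i j
  rw [jacobianMatrix, Matrix.of_apply, (hasFDerivAt_pi'.1 hf i).fderiv, LinearMap.toMatrix'_apply]
  rfl

theorem hasFDerivAt_reactionRate (k1 k2 k3 iA iB iC iP iQ : ℝ) (c : Fin 5 → ℝ) :
    HasFDerivAt (reactionRate k1 k2 k3 iA iB iC iP iQ)
      (LinearMap.toContinuousLinearMap (Matrix.toLin' (reactionJacobian k1 k2 k3 c))) c := by
  have coord : ∀ i : Fin 5, HasFDerivAt (fun x : Fin 5 → ℝ => x i) (proj i : (Fin 5 → ℝ) →L[ℝ] ℝ) c :=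
    fun i => hasFDerivAt_apply i c
  have massAction : ∀ (k : ℝ) (i j : Fin 5), HasFDerivAt (fun x : Fin 5 → ℝ => k * x i * x j)
      ((k * c i) • proj j + c j • k • proj i) c :=
    fun k i j => ((coord i).const_mul k).mul (coord j)
  refine hasFDerivAt_pi'.2 fun i => ?_
  fin_cases i <;> [
    refine ((((hasFDerivAt_const iA c).sub (coord 0)).sub (massAction k1 0 1)).add
      ((coord 2).const_mul (2 * k3))).congr_fderiv ?_;
    refine ((((hasFDerivAt_const iB c).sub (coord 1)).sub (massAction k1 0 1)).sub
      (massAction k2 1 2)).congr_fderiv ?_;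
    refine ((((hasFDerivAt_const iC c).sub (coord 2)).sub (massAction k2 1 2)).sub
      ((coord 2).const_mul k3)).congr_fderiv ?_;
    refine (((hasFDerivAt_const iP c).sub (coord 3)).add (massAction k1 0 1)).congr_fderiv ?_;
    refine (((hasFDerivAt_const iQ c).sub (coord 4)).add (massAction k2 1 2)).congr_fderiv ?_] <;>
  · ext v
    simp [reactionJacobian, dotProduct, Fin.sum_univ_five]
    ring

theorem det_reactionJacobian (k1 k2 k3 : ℝ) (c : Fin 5 → ℝ) :
    (reactionJacobian k1 k2 k3 c).det =
      -1 - k1 * c 0 - k2 * c 2 - k2 * c 1 - k1 * k2 * c 0 * c 1 - k3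
        - k1 * k3 * c 0 - k2 * k3 * c 2 - k1 * c 1 - k1 * k3 * c 1
        - k1 * k2 * c 1 ^ 2 - k1 * k2 * c 1 * c 2 + k1 * k2 * k3 * c 1 * c 2 := by
  simp [reactionJacobian, Matrix.det_succ_row_zero, Fin.sum_univ_succ, Fin.succAbove]
  ring

theorem stmt_17_general (k1 k2 k3 iA iB iC iP iQ : ℝ)
    (c : Fin 5 → ℝ) :
    (Matrix.of fun i j : Fin 5 =>
      fderiv ℝ (fun x : Fin 5 → ℝ =>
        (![iA - x 0 - k1 * x 0 * x 1 + 2 * k3 * x 2,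
           iB - x 1 - k1 * x 0 * x 1 - k2 * x 1 * x 2,
           iC - x 2 - k2 * x 1 * x 2 - k3 * x 2,
           iP - x 3 + k1 * x 0 * x 1,
           iQ - x 4 + k2 * x 1 * x 2] : Fin 5 → ℝ) i) c
        (Pi.single j (1 : ℝ))).det =
      -1 - k1 * c 0 - k2 * c 2 - k2 * c 1 - k1 * k2 * c 0 * c 1 - k3
        - k1 * k3 * c 0 - k2 * k3 * c 2 - k1 * c 1 - k1 * k3 * c 1
        - k1 * k2 * c 1 ^ 2 - k1 * k2 * c 1 * c 2 + k1 * k2 * k3 * c 1 * c 2 := by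
  change (jacobianMatrix (reactionRate k1 k2 k3 iA iB iC iP iQ) c).det = _
  rw [(hasFDerivAt_reactionRate k1 k2 k3 iA iB iC iP iQ c).jacobianMatrix_eq,
    LinearMap.coe_toContinuousLinearMap, LinearMap.toMatrix'_toLin', det_reactionJacobian]

theorem stmt_17 (k1 k2 k3 iA iB iC iP iQ : ℝ)
    (hk1 : 0 < k1) (hk2 : 0 < k2) (hk3 : 0 < k3)
    (hiA : 0 < iA) (hiB : 0 < iB) (hiC : 0 < iC) (hiP : 0 < iP) (hiQ : 0 < iQ)
    (c : Fin 5 → ℝ) (hc : ∀ i, 0 < c i) :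
    (Matrix.of fun i j : Fin 5 =>
      fderiv ℝ (fun x : Fin 5 → ℝ =>
        (![iA - x 0 - k1 * x 0 * x 1 + 2 * k3 * x 2,
           iB - x 1 - k1 * x 0 * x 1 - k2 * x 1 * x 2,
           iC - x 2 - k2 * x 1 * x 2 - k3 * x 2,
           iP - x 3 + k1 * x 0 * x 1,
           iQ - x 4 + k2 * x 1 * x 2] : Fin 5 → ℝ) i) c
        (Pi.single j (1 : ℝ))).det =
      -1 - k1 * c 0 - k2 * c 2 - k2 * c 1 - k1 * k2 * c 0 * c 1 - k3
        - k1 * k3 * c 0 - k2 * k3 * c 2 - k1 * c 1 - k1 * k3 * c 1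
        - k1 * k2 * c 1 ^ 2 - k1 * k2 * c 1 * c 2 + k1 * k2 * k3 * c 1 * c 2 :=
  stmt_17_general k1 k2 k3 iA iB iC iP iQ c
end

section
/- With the setup of the previous determinant formula for the network {A+B → P, B+C → Q, C → 2A} with unit outflows and mass-action kinetics: if the rate constant k_3 = k_{C→2A} satisfies 0 < k_3 ≤ 1, then det(∂r/∂c)(c) < 0 for every c in the open positive orthant ℝ⁵_{>0}. -/
/-!
The species P and Q only flow out, so the Jacobian is block lower triangular with lower right
block `-1`, and its determinant is that of the `A, B, C` block. Expanding it gives minus a sum of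
positive monomials plus the single cross term `(k₃ - 1) k₁ k₂ c_B c_C`, which is `≤ 0` for `k₃ ≤ 1`.
-/

theorem Matrix.of_fderiv_single_eq {𝕜 ι κ : Type*} [NontriviallyNormedField 𝕜] [Fintype ι]
    [DecidableEq ι] {f : κ → (ι → 𝕜) → 𝕜} {J : Matrix κ ι 𝕜} {c : ι → 𝕜}
    (h : ∀ i, HasFDerivAt (f i) (∑ j, J i j • (ContinuousLinearMap.proj j : (ι → 𝕜) →L[𝕜] 𝕜)) c) :
    Matrix.of (fun i j => fderiv 𝕜 (f i) c (Pi.single j 1)) = J := by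
  ext i j
  simp [(h i).fderiv, Pi.single_apply]

namespace ReactionNetwork

variable (k1 k2 k3 iA iB iC iP iQ : ℝ) (c : Fin 5 → ℝ)

def rate (x : Fin 5 → ℝ) : Fin 5 → ℝ :=
  ![iA - x 0 - k1 * x 0 * x 1 + 2 * k3 * x 2,
    iB - x 1 - k1 * x 0 * x 1 - k2 * x 1 * x 2,
    iC - x 2 - k2 * x 1 * x 2 - k3 * x 2,
    iP - x 3 + k1 * x 0 * x 1,
    iQ - x 4 + k2 * x 1 * x 2]

def rateJacobian : Matrix (Fin 5) (Fin 5) ℝ :=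
  !![-1 - k1 * c 1, -(k1 * c 0), 2 * k3, 0, 0;
     -(k1 * c 1), -1 - k1 * c 0 - k2 * c 2, -(k2 * c 1), 0, 0;
     0, -(k2 * c 2), -1 - k2 * c 1 - k3, 0, 0;
     k1 * c 1, k1 * c 0, 0, -1, 0;
     0, k2 * c 2, k2 * c 1, 0, -1]

theorem hasFDerivAt_rate_apply (i : Fin 5) :
    HasFDerivAt (fun x => rate k1 k2 k3 iA iB iC iP iQ x i)
      (∑ j, rateJacobian k1 k2 k3 c i j • (ContinuousLinearMap.proj j : (Fin 5 → ℝ) →L[ℝ] ℝ)) c := by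
  have hx (j : Fin 5) : HasFDerivAt (fun x : Fin 5 → ℝ => x j) (ContinuousLinearMap.proj j) c :=
    hasFDerivAt_apply (𝕜 := ℝ) j c
  have hmul (j l : Fin 5) (k : ℝ) := ((hx j).const_mul k).mul (hx l)
  fin_cases i
  · refine ((((hasFDerivAt_const iA c).sub (hx 0)).sub (hmul 0 1 k1)).add
      ((hx 2).const_mul (2 * k3))).congr_fderiv ?_
    ext v; simp [rateJacobian, Fin.sum_univ_five]; ring
  · refine ((((hasFDerivAt_const iB c).sub (hx 1)).sub (hmul 0 1 k1)).sub
      (hmul 1 2 k2)).congr_fderiv ?_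
    ext v; simp [rateJacobian, Fin.sum_univ_five]; ring
  · refine ((((hasFDerivAt_const iC c).sub (hx 2)).sub (hmul 1 2 k2)).sub
      ((hx 2).const_mul k3)).congr_fderiv ?_
    ext v; simp [rateJacobian, Fin.sum_univ_five]; ring
  · refine (((hasFDerivAt_const iP c).sub (hx 3)).add (hmul 0 1 k1)).congr_fderiv ?_
    ext v; simp [rateJacobian, Fin.sum_univ_five]; ring
  · refine (((hasFDerivAt_const iQ c).sub (hx 4)).add (hmul 1 2 k2)).congr_fderiv ?_
    ext v; simp [rateJacobian, Fin.sum_univ_five]; ring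

theorem det_rateJacobian :
    (rateJacobian k1 k2 k3 c).det =
      -(1 + k1 * c 0 + k2 * c 2 + k2 * c 1 + k1 * k2 * c 0 * c 1 + k3 + k1 * k3 * c 0
        + k2 * k3 * c 2 + k1 * c 1 + k1 * k3 * c 1 + k1 * k2 * c 1 ^ 2)
      + (k3 - 1) * k1 * k2 * c 1 * c 2 := by
  simp [rateJacobian, Matrix.det_succ_row_zero, Fin.sum_univ_succ, Fin.succAbove]
  ring

theorem det_rateJacobian_neg (hk1 : 0 < k1) (hk2 : 0 < k2) (hk3 : 0 < k3) (hk3le : k3 ≤ 1)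
    (hc : ∀ i, 0 < c i) : (rateJacobian k1 k2 k3 c).det < 0 := by
  have hcA := hc 0; have hcB := hc 1; have hcC := hc 2
  have hpos : 0 < 1 + k1 * c 0 + k2 * c 2 + k2 * c 1 + k1 * k2 * c 0 * c 1 + k3 + k1 * k3 * c 0
        + k2 * k3 * c 2 + k1 * c 1 + k1 * k3 * c 1 + k1 * k2 * c 1 ^ 2 := by positivity
  have hcross : 0 ≤ (1 - k3) * k1 * k2 * c 1 * c 2 := by
    have := sub_nonneg.2 hk3le; positivity
  rw [det_rateJacobian]
  linarith

end ReactionNetwork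

open ReactionNetwork in
theorem stmt_18_general (k1 k2 k3 iA iB iC iP iQ : ℝ)
    (hk1 : 0 < k1) (hk2 : 0 < k2) (hk3 : 0 < k3) (hk3le : k3 ≤ 1)
    (c : Fin 5 → ℝ) (hc : ∀ i, 0 < c i) :
    (Matrix.of fun i j : Fin 5 =>
      fderiv ℝ (fun x : Fin 5 → ℝ =>
        (![iA - x 0 - k1 * x 0 * x 1 + 2 * k3 * x 2,
           iB - x 1 - k1 * x 0 * x 1 - k2 * x 1 * x 2,
           iC - x 2 - k2 * x 1 * x 2 - k3 * x 2,
           iP - x 3 + k1 * x 0 * x 1,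
           iQ - x 4 + k2 * x 1 * x 2] : Fin 5 → ℝ) i) c
        (Pi.single j (1 : ℝ))).det < 0 := by
  have hJ := Matrix.of_fderiv_single_eq (hasFDerivAt_rate_apply k1 k2 k3 iA iB iC iP iQ c)
  calc _ = (rateJacobian k1 k2 k3 c).det := congrArg Matrix.det hJ
    _ < 0 := det_rateJacobian_neg k1 k2 k3 c hk1 hk2 hk3 hk3le hc

theorem stmt_18 (k1 k2 k3 iA iB iC iP iQ : ℝ)
    (hk1 : 0 < k1) (hk2 : 0 < k2) (hk3 : 0 < k3) (hk3le : k3 ≤ 1)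
    (hiA : 0 < iA) (hiB : 0 < iB) (hiC : 0 < iC) (hiP : 0 < iP) (hiQ : 0 < iQ)
    (c : Fin 5 → ℝ) (hc : ∀ i, 0 < c i) :
    (Matrix.of fun i j : Fin 5 =>
      fderiv ℝ (fun x : Fin 5 → ℝ =>
        (![iA - x 0 - k1 * x 0 * x 1 + 2 * k3 * x 2,
           iB - x 1 - k1 * x 0 * x 1 - k2 * x 1 * x 2,
           iC - x 2 - k2 * x 1 * x 2 - k3 * x 2,
           iP - x 3 + k1 * x 0 * x 1,
           iQ - x 4 + k2 * x 1 * x 2] : Fin 5 → ℝ) i) c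
        (Pi.single j (1 : ℝ))).det < 0 :=
  stmt_18_general k1 k2 k3 iA iB iC iP iQ hk1 hk2 hk3 hk3le c hc
end
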